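/- arXiv:1101.4504 — 13 statements merged into one kernel-verified Lean document; each statement's English description precedes it below -/
import Mathlib

section
/- If H is a subgroup of countable index in a topological group G that is a Baire space, then H (with the subspace topology) is a Baire space. -/
/-!
Let `s ⊆ G` be comeagre, `x ∈ H`, and `P` a neighbourhood of `1` with `x P⁻¹ P` inside a given
neighbourhood of `x`. For each of the countably many cosets of `H` meeting `P` pick a
representative `g_q ∈ P`. The intersection of the translates `g_q x⁻¹ s` is still comeagre, hence
dense because `G` is Baire, so it contains some `z ∈ P`; with `q = zH` the point `x g_q⁻¹ z` then
lies in `H ∩ s` near `x`. So `H ∩ s` is dense in `H` for every comeagre `s`, and this makes `H` a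
Baire space: a countable family of dense open subsets of `H` comes from open subsets of `G` whose
intersection, enlarged by the complement of `closure H`, is comeagre.
-/

open Set Filter Topology Pointwise

theorem smul_mem_residual {G X : Type*} [Group G] [MulAction G X] [TopologicalSpace X]
    [ContinuousConstSMul G X] (g : G) {s : Set X} (hs : s ∈ residual X) :
    g • s ∈ residual X := by
  rw [← preimage_smul_inv]
  exact tendsto_residual_of_isOpenMap (continuous_const_smul _) (isOpenMap_smul _) hs

theorem BaireSpace.of_subset_closure_inter_of_mem_residual {X : Type*} [TopologicalSpace X]
    {Y : Set X} (h : ∀ s ∈ residual X, Y ⊆ closure (Y ∩ s)) : BaireSpace Y := by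
  refine ⟨fun f hfo hfd => ?_⟩
  choose V hVo hVf using fun n => isOpen_induced_iff.1 (hfo n)
  have hYV : ∀ n, closure Y ⊆ closure (V n) := fun n => closure_minimal (fun y hy => by
    have hy' := (hfd n).closure_eq ▸ mem_univ (⟨y, hy⟩ : Y)
    rw [closure_subtype, ← hVf n] at hy'
    exact closure_mono (image_preimage_subset _ _) hy') isClosed_closure
  have hVd : ∀ n, Dense (V n ∪ (closure Y)ᶜ) := fun n x => by
    by_cases hx : x ∈ closure Y
    · exact closure_mono subset_union_left (hYV n hx)
    · exact subset_closure (Or.inr hx)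
  have hres : (⋂ n, (V n ∪ (closure Y)ᶜ)) ∈ residual X :=
    countable_iInter_mem.2 fun n => residual_of_dense_open
      ((hVo n).union isClosed_closure.isOpen_compl) (hVd n)
  have hsub : Y ∩ ⋂ n, (V n ∪ (closure Y)ᶜ) ⊆ (↑) '' ⋂ n, f n := by
    rintro x ⟨hxY, hxV⟩
    refine ⟨⟨x, hxY⟩, mem_iInter.2 fun n => ?_, rfl⟩
    rw [← hVf n]
    exact (mem_iInter.1 hxV n).resolve_right (not_not_intro (subset_closure hxY))
  exact fun y => closure_subtype.2 (closure_mono hsub (h _ hres y.2))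

theorem Subgroup.subset_closure_inter_of_mem_residual {G : Type*} [Group G]
    [TopologicalSpace G] [IsTopologicalGroup G] [BaireSpace G] (H : Subgroup G)
    [Countable (G ⧸ H)] {s : Set G} (hs : s ∈ residual G) :
    (H : Set G) ⊆ _root_.closure (H ∩ s) := by
  intro x hx
  refine mem_closure_iff_nhds.2 fun U hU => ?_
  have hcont : Tendsto (fun p : G × G => x * (p.1⁻¹ * p.2)) (𝓝 1 ×ˢ 𝓝 1) (𝓝 x) := by
    simpa [nhds_prod_eq] using
      (by fun_prop : Continuous fun p : G × G => x * (p.1⁻¹ * p.2)).tendsto (1, 1)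
  obtain ⟨P, hP, hPU⟩ := mem_prod_self_iff.1 (hcont hU)
  -- `g q` lies in `q ∩ P` whenever the coset `q` meets `P`
  set g := Function.invFunOn (QuotientGroup.mk : G → G ⧸ H) P
  have ht : (⋂ q, g q • x⁻¹ • s) ∈ residual G :=
    countable_iInter_mem.2 fun q => smul_mem_residual _ (smul_mem_residual _ hs)
  obtain ⟨z, hzP, hzt⟩ := mem_closure_iff_nhds.1 (dense_of_mem_residual ht 1) P hP
  have hz : ∃ a ∈ P, (a : G ⧸ H) = z := ⟨z, hzP, rfl⟩
  have hgH : (g z)⁻¹ * z ∈ H := QuotientGroup.eq.1 (Function.invFunOn_eq hz)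
  have hgs : x * ((g z)⁻¹ * z) ∈ s := by
    simpa [mem_smul_set_iff_inv_smul_mem] using mem_iInter.1 hzt z
  exact ⟨x * ((g z)⁻¹ * z), hPU (mk_mem_prod (Function.invFunOn_mem hz) hzP),
    H.mul_mem hx hgH, hgs⟩

/-- If `H` is a subgroup of countable index in a topological group `G` that is a Baire
space, then `H` (with the subspace topology) is a Baire space. -/
theorem stmt0 {G : Type*} [Group G] [TopologicalSpace G] [IsTopologicalGroup G]
    [BaireSpace G] (H : Subgroup G) (hcount : Countable (G ⧸ H)) :
    BaireSpace H :=
  BaireSpace.of_subset_closure_inter_of_mem_residual fun _ hs =>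
    H.subset_closure_inter_of_mem_residual hs
end

section
/- If f : G → H is a continuous surjective group homomorphism between topological groups, G is totally bounded (precompact) and a Baire space, and H is Hausdorff and totally bounded, then H is a Baire space. -/
/-!
Call a map `f` *somewhat open* if the closure of the image of every nonempty open set has
nonempty interior. For a continuous surjection with this property, preimages of dense open sets
are dense, so a countable intersection of dense open sets in the target pulls back to a dense
set of the Baire domain, whose image is dense. A surjective homomorphism out of a totally bounded
group is somewhat open: finitely many translates of a nonempty open set `V` cover `G`, so finitely
many translates of the closed set `closure (f '' V)` cover `H`, and a finite union of closed sets
with empty interior has empty interior.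
-/

open Set Pointwise

theorem Set.Finite.interior_biUnion_eq_empty {X ι : Type*} [TopologicalSpace X] {S : Set ι}
    (hS : S.Finite) {t : ι → Set X} (hclosed : ∀ i ∈ S, IsClosed (t i))
    (hint : ∀ i ∈ S, interior (t i) = ∅) : interior (⋃ i ∈ S, t i) = ∅ := by
  induction S, hS using Set.Finite.induction_on with
  | empty => simp
  | @insert a S _ _ ih =>
    rw [biUnion_insert, interior_union_isClosed_of_interior_empty (hclosed a (mem_insert a S))
      (ih (fun i hi => hclosed i (mem_insert_of_mem a hi))
        (fun i hi => hint i (mem_insert_of_mem a hi))), hint a (mem_insert a S)]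

theorem Dense.preimage_of_interior_closure_image_nonempty {X Y : Type*} [TopologicalSpace X]
    [TopologicalSpace Y] {f : X → Y}
    (hsomewhatOpen : ∀ V : Set X, IsOpen V → V.Nonempty → (interior (closure (f '' V))).Nonempty)
    {D : Set Y} (hD : Dense D) (hDopen : IsOpen D) : Dense (f ⁻¹' D) := by
  refine dense_iff_inter_open.mpr fun V hV hVne => ?_
  obtain ⟨y, hyV, hyD⟩ :=
    hD.inter_open_nonempty _ isOpen_interior (hsomewhatOpen V hV hVne)
  obtain ⟨_, hD', x, hxV, rfl⟩ := mem_closure_iff.mp (interior_subset hyV) D hDopen hyD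
  exact ⟨x, hxV, hD'⟩

theorem BaireSpace.of_surjective_of_interior_closure_image_nonempty {X Y : Type*}
    [TopologicalSpace X] [TopologicalSpace Y] [BaireSpace X] {f : X → Y} (hf : Continuous f)
    (hsurj : Function.Surjective f)
    (hsomewhatOpen : ∀ V : Set X, IsOpen V → V.Nonempty → (interior (closure (f '' V))).Nonempty) :
    BaireSpace Y where
  baire_property s hso hsd := by
    have hpre : Dense (⋂ n, f ⁻¹' s n) := dense_iInter_of_isOpen (fun n => (hso n).preimage hf)
      fun n => (hsd n).preimage_of_interior_closure_image_nonempty hsomewhatOpen (hso n)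
    refine (hsurj.denseRange.dense_image hf hpre).mono ?_
    exact (image_iInter_subset _ _).trans (iInter_mono fun n => image_preimage_subset f (s n))

theorem exists_finset_mul_eq_univ_of_isOpen {G : Type*} [Group G] [TopologicalSpace G]
    [ContinuousMul G] (htb : ∀ U ∈ nhds (1 : G), ∃ F : Finset G, U * (F : Set G) = univ)
    {V : Set G} (hV : IsOpen V) (hVne : V.Nonempty) : ∃ F : Finset G, V * (F : Set G) = univ := by
  classical
  obtain ⟨v, hv⟩ := hVne
  have hnhds : V * {v⁻¹} ∈ nhds (1 : G) :=
    hV.mul_right.mem_nhds ⟨v, hv, v⁻¹, rfl, mul_inv_cancel v⟩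
  obtain ⟨F, hF⟩ := htb _ hnhds
  exact ⟨{v⁻¹} * F, by rw [Finset.coe_mul, Finset.coe_singleton, ← mul_assoc, hF]⟩

theorem Set.Finite.interior_closure_nonempty_of_mul_eq_univ {H : Type*} [Group H]
    [TopologicalSpace H] [ContinuousMul H] {A S : Set H} (hS : S.Finite) (hcover : A * S = univ) :
    (interior (closure A)).Nonempty := by
  by_contra hempty
  rw [not_nonempty_iff_eq_empty] at hempty
  have htranslates : interior (⋃ s ∈ S, (· * s) '' closure A) = ∅ := by
    refine hS.interior_biUnion_eq_empty (fun s _ => ?_) (fun s _ => ?_)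
    · exact (Homeomorph.mulRight s).isClosedMap _ isClosed_closure
    · rw [← Homeomorph.coe_mulRight, ← (Homeomorph.mulRight s).image_interior, hempty, image_empty]
  have hcover' : ⋃ s ∈ S, (· * s) '' closure A = univ := by
    refine eq_univ_of_univ_subset (hcover ▸ ?_)
    rw [← iUnion_mul_right_image]
    exact iUnion₂_mono fun s _ => image_mono subset_closure
  rw [hcover', interior_univ] at htranslates
  exact univ_nonempty.ne_empty htranslates

theorem stmt2_general {G H : Type*} [Group G] [TopologicalSpace G] [IsTopologicalGroup G]
    [Group H] [TopologicalSpace H] [IsTopologicalGroup H]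
    (f : G →* H) (hf : Continuous f) (hsurj : Function.Surjective f)
    (hGtb : ∀ U ∈ nhds (1 : G), ∃ F : Finset G, U * (F : Set G) = Set.univ)
    [BaireSpace G] : BaireSpace H := by
  refine .of_surjective_of_interior_closure_image_nonempty hf hsurj fun V hV hVne => ?_
  obtain ⟨F, hF⟩ := exists_finset_mul_eq_univ_of_isOpen hGtb hV hVne
  refine (F.finite_toSet.image f).interior_closure_nonempty_of_mul_eq_univ ?_
  rw [← image_mul, hF, image_univ_of_surjective hsurj]

/-- A continuous surjective homomorphic image of a totally bounded Baire topological group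
in a Hausdorff totally bounded group is Baire. -/
theorem stmt2 {G H : Type*} [Group G] [TopologicalSpace G] [IsTopologicalGroup G]
    [Group H] [TopologicalSpace H] [IsTopologicalGroup H] [T2Space H]
    (f : G →* H) (hf : Continuous f) (hsurj : Function.Surjective f)
    (hGtb : ∀ U ∈ nhds (1 : G), ∃ F : Finset G, U * (F : Set G) = Set.univ)
    (hHtb : ∀ U ∈ nhds (1 : H), ∃ F : Finset H, U * (F : Set H) = Set.univ)
    [BaireSpace G] : BaireSpace H :=
  stmt2_general f hf hsurj hGtb
end

section
/- A totally bounded Hausdorff topological group G is a Baire space if and only if G is a non-meager subset of its completion. -/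
/-!
A dense subgroup `G` of a compact group `K` is Baire iff its nonempty relatively open subsets
are non-meagre. Meagreness passes between `G` and `K` in both directions, since `G` is dense.
If some nonempty relatively open `O ∩ G` were meagre, then, because countably many
`G`-translates of `O` cover `K`, the set `G` would be covered by countably many translates of the
meagre set `O ∩ G`, hence be meagre itself.
-/

open Set Topology
open scoped Pointwise

theorem baireSpace_iff_forall_isOpen_not_isMeagre {X : Type*} [TopologicalSpace X] :
    BaireSpace X ↔ ∀ s : Set X, IsOpen s → s.Nonempty → ¬ IsMeagre s := by
  refine ⟨fun _ _ hs hne => not_isMeagre_of_isOpen hs hne, fun h => ⟨fun f hfo hfd => ?_⟩⟩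
  have hmeagre : IsMeagre (⋂ n, f n)ᶜ := by
    rw [IsMeagre, compl_compl]
    exact countable_iInter_mem.2 fun n => residual_of_dense_open (hfo n) (hfd n)
  refine dense_iff_inter_open.2 fun U hU hne => ?_
  by_contra hdisj
  exact h U hU hne (hmeagre.mono fun x hxU hx => hdisj ⟨x, hxU, hx⟩)

theorem Topology.IsDenseInducing.isNowhereDense_preimage {X Y : Type*} [TopologicalSpace X]
    [TopologicalSpace Y] {i : X → Y} (di : IsDenseInducing i) {t : Set Y}
    (ht : IsNowhereDense t) : IsNowhereDense (i ⁻¹' t) := by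
  refine isNowhereDense_iff_forall_notMem_nhds.2 fun x _ hx => ?_
  have hsub : i '' closure (i ⁻¹' t) ⊆ closure t :=
    (image_closure_subset_closure_image di.continuous).trans
      (closure_mono (image_preimage_subset i t))
  have : i x ∈ interior (closure t) :=
    mem_interior_iff_mem_nhds.2 (Filter.mem_of_superset (di.closure_image_mem_nhds hx)
      (closure_minimal hsub isClosed_closure))
  rwa [ht] at this

theorem Topology.IsDenseInducing.isMeagre_preimage {X Y : Type*} [TopologicalSpace X]
    [TopologicalSpace Y] {i : X → Y} (di : IsDenseInducing i) {t : Set Y}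
    (ht : IsMeagre t) : IsMeagre (i ⁻¹' t) := by
  obtain ⟨S, hS, hSc, htS⟩ := isMeagre_iff_countable_union_isNowhereDense.1 ht
  refine isMeagre_iff_countable_union_isNowhereDense.2
    ⟨preimage i '' S, forall_mem_image.2 fun s hs => di.isNowhereDense_preimage (hS s hs),
      hSc.image _, fun x hx => ?_⟩
  obtain ⟨s, hs, hxs⟩ := htS hx
  exact ⟨i ⁻¹' s, mem_image_of_mem _ hs, hxs⟩

theorem IsMeagre.smul {G X : Type*} [Group G] [MulAction G X] [TopologicalSpace X]
    [ContinuousConstSMul G X] (c : G) {s : Set X} (hs : IsMeagre s) : IsMeagre (c • s) := by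
  simpa only [Homeomorph.smul_apply, image_smul] using
    (Homeomorph.smul c).isInducing.isMeagre_image hs

theorem Dense.biUnion_smul_eq_univ {K : Type*} [Group K] [TopologicalSpace K]
    [IsTopologicalGroup K] {S : Set K} (hS : Dense S) {O : Set K} (hO : IsOpen O)
    (hne : O.Nonempty) : ⋃ g ∈ S, g • O = univ := by
  refine eq_univ_of_forall fun x => ?_
  obtain ⟨o, ho⟩ := hne
  have hopen : IsOpen {g : K | g⁻¹ * x ∈ O} := hO.preimage (by fun_prop)
  obtain ⟨g, hgO, hgS⟩ := hS.inter_open_nonempty _ hopen ⟨x * o⁻¹, by simpa using ho⟩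
  exact mem_biUnion hgS (mem_smul_set_iff_inv_smul_mem.2 hgO)

theorem Subgroup.isMeagre_of_isMeagre_isOpen_inter {K : Type*} [Group K] [TopologicalSpace K]
    [IsTopologicalGroup K] [LindelofSpace K] {G : Subgroup K} (hG : Dense (G : Set K))
    {O : Set K} (hO : IsOpen O) (hne : (O ∩ G).Nonempty) (hmeagre : IsMeagre (O ∩ G)) :
    IsMeagre (G : Set K) := by
  obtain ⟨r, hrG, hrc, hcover⟩ := isLindelof_univ.elim_countable_subcover_image
    (fun g _ => hO.smul g) (hG.biUnion_smul_eq_univ hO (hne.mono inter_subset_left)).ge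
  refine (isMeagre_biUnion hrc fun g _ => hmeagre.smul g).mono fun x hx => ?_
  obtain ⟨g, hgr, hxg⟩ := mem_iUnion₂.1 (hcover (mem_univ x))
  refine mem_biUnion hgr (mem_smul_set_iff_inv_smul_mem.2 ⟨?_, ?_⟩)
  · exact mem_smul_set_iff_inv_smul_mem.1 hxg
  · exact G.mul_mem (G.inv_mem (hrG hgr)) hx

theorem stmt3_general {K : Type*} [Group K] [TopologicalSpace K] [IsTopologicalGroup K]
    [CompactSpace K] (G : Subgroup K) (hdense : Dense (G : Set K)) :
    BaireSpace G ↔ ¬ IsMeagre (G : Set K) := by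
  rw [baireSpace_iff_forall_isOpen_not_isMeagre]
  refine ⟨fun hBaire hmeagre => ?_, fun hG W hW hne hmeagre => ?_⟩
  · have := hdense.isDenseInducing_val.isMeagre_preimage hmeagre
    rw [Subtype.coe_preimage_self] at this
    exact hBaire univ isOpen_univ univ_nonempty this
  · obtain ⟨O, hO, rfl⟩ := isOpen_induced_iff.1 hW
    have hOG : Subtype.val '' (Subtype.val ⁻¹' O : Set G) = O ∩ G :=
      (Subtype.image_preimage_coe _ _).trans (inter_comm _ _)
    refine hG (G.isMeagre_of_isMeagre_isOpen_inter hdense hO ?_ ?_)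
    · exact hOG ▸ hne.image _
    · exact hOG ▸ hmeagre.image_val

/-- A totally bounded Hausdorff topological group `G` (realized as a dense subgroup of a
compact Hausdorff group `K`, its Raĭkov completion) is a Baire space iff `G` is a
non-meager subset of `K`. -/
theorem stmt3 {K : Type*} [Group K] [TopologicalSpace K] [IsTopologicalGroup K]
    [CompactSpace K] [T2Space K] (G : Subgroup K) (hdense : Dense (G : Set K)) :
    BaireSpace G ↔ ¬ IsMeagre (G : Set K) :=
  stmt3_general G hdense
end

section
/- If G is a dense non-meager subgroup of a compact Hausdorff group K, then G is a Baire space. -/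
/-!
If `G` were not Baire, some nonempty relatively open set `V ∩ G` (`V` open in `K`) would be meagre
in `G`, hence in `K`. Since `G` is dense, its translates `g • V` with `g ∈ G` cover `K`, so finitely
many of them do by compactness; then `G` is covered by the finitely many meagre sets `g • (V ∩ G)`,
contradicting that `G` is not meagre.
-/

open Set
open scoped Pointwise

theorem BaireSpace.of_forall_isOpen_not_isMeagre {X : Type*} [TopologicalSpace X]
    (h : ∀ s : Set X, IsOpen s → s.Nonempty → ¬IsMeagre s) : BaireSpace X := by
  refine ⟨fun f hopen hdense => dense_iff_inter_open.2 fun W hW hWne => ?_⟩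
  have hres : (⋂ n, f n) ∈ residual X :=
    countable_iInter_mem.2 fun n => residual_of_dense_open (hopen n) (hdense n)
  by_contra hempty
  have hsub : W ⊆ (⋂ n, f n)ᶜ := fun x hxW hx => hempty ⟨x, hxW, hx⟩
  exact h W hW hWne (IsMeagre.mono hsub (by rwa [IsMeagre, compl_compl]))

theorem IsMeagre.smul_set {M X : Type*} [Group M] [MulAction M X] [TopologicalSpace X]
    [ContinuousConstSMul M X] {s : Set X} (hs : IsMeagre s) (g : M) : IsMeagre (g • s) :=
  (Homeomorph.smul g).isInducing.isMeagre_image hs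

section CompactGroup

variable {K : Type*} [Group K] [TopologicalSpace K] [IsTopologicalGroup K] [CompactSpace K]

theorem Subgroup.exists_finset_subset_iUnion_smul_of_dense {G : Subgroup K}
    (hdense : Dense (G : Set K)) {V : Set K} (hV : IsOpen V) (hne : V.Nonempty) :
    ∃ t : Finset G, univ ⊆ ⋃ g ∈ t, (g : K) • V := by
  have hcover : univ ⊆ ⋃ g : G, (g : K) • V := by
    intro x _
    have hGV : (G : Set K) * V = univ := by
      rw [← hV.closure_mul, hdense.closure_eq, univ_mul hne]
    obtain ⟨g, hg, v, hv, rfl⟩ : x ∈ (G : Set K) * V := hGV ▸ mem_univ x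
    exact mem_iUnion.2 ⟨⟨g, hg⟩, smul_mem_smul_set hv⟩
  exact isCompact_univ.elim_finite_subcover _ (fun g => hV.smul (g : K)) hcover

theorem Subgroup.not_isMeagre_open_inter {G : Subgroup K} (hdense : Dense (G : Set K))
    (hnm : ¬IsMeagre (G : Set K)) {V : Set K} (hV : IsOpen V) (hne : (V ∩ G).Nonempty) :
    ¬IsMeagre (V ∩ G) := by
  intro hm
  obtain ⟨t, ht⟩ := exists_finset_subset_iUnion_smul_of_dense hdense hV (hne.mono inter_subset_left)
  have hsub : (G : Set K) ⊆ ⋃ g ∈ t, (g : K) • (V ∩ G) := by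
    intro x hx
    obtain ⟨g, hgt, v, hv, rfl⟩ := mem_iUnion₂.1 (ht (mem_univ x))
    have hvG : v ∈ G := by simpa using G.mul_mem (G.inv_mem g.2) hx
    exact mem_iUnion₂.2 ⟨g, hgt, smul_mem_smul_set ⟨hv, hvG⟩⟩
  refine hnm (IsMeagre.mono hsub ?_)
  exact isMeagre_biUnion t.countable_toSet fun g _ => hm.smul_set (g : K)

end CompactGroup

theorem stmt4_general {K : Type*} [Group K] [TopologicalSpace K] [IsTopologicalGroup K]
    [CompactSpace K] (G : Subgroup K) (hdense : Dense (G : Set K))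
    (hnm : ¬ IsMeagre (G : Set K)) :
    BaireSpace G := by
  refine BaireSpace.of_forall_isOpen_not_isMeagre fun W hW hWne hWm => ?_
  obtain ⟨V, hV, rfl⟩ := isOpen_induced_iff.1 hW
  have himage : ((↑) '' ((↑) ⁻¹' V : Set G) : Set K) = V ∩ G := by
    rw [image_preimage_eq_inter_range, Subtype.range_coe]
  refine G.not_isMeagre_open_inter hdense hnm hV ?_ (himage ▸ hWm.image_val)
  exact himage ▸ hWne.image _

/-- A dense non-meager subgroup of a compact Hausdorff group is a Baire space. -/
theorem stmt4 {K : Type*} [Group K] [TopologicalSpace K] [IsTopologicalGroup K]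
    [CompactSpace K] [T2Space K] (G : Subgroup K) (hdense : Dense (G : Set K))
    (hnm : ¬ IsMeagre (G : Set K)) :
    BaireSpace G :=
  stmt4_general G hdense hnm
end

section
/- Every dense subgroup of a compact Hausdorff topological group has countable cellularity, i.e., every family of pairwise disjoint nonempty open subsets is countable. -/
/-!
A compact group carries a Haar measure, which is finite and gives positive mass to every
nonempty open set; hence a disjoint family of nonempty open sets is countable. A disjoint
family of open sets of a dense subgroup extends to a disjoint family of open sets of the
whole group, since two open sets that meet also meet inside any dense set.
-/

open MeasureTheory Set

def HasCountableCellularity (X : Type*) [TopologicalSpace X] : Prop :=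
  ∀ 𝒰 : Set (Set X), (∀ U ∈ 𝒰, IsOpen U ∧ U.Nonempty) → 𝒰.PairwiseDisjoint id → 𝒰.Countable

section

variable {X : Type*} [TopologicalSpace X]

theorem hasCountableCellularity_of_isOpenPosMeasure [MeasurableSpace X] [OpensMeasurableSpace X]
    (μ : Measure X) [μ.IsOpenPosMeasure] [SFinite μ] : HasCountableCellularity X := by
  intro 𝒰 hopen hdisj
  have hpos := Measure.countable_meas_pos_of_disjoint_iUnion (μ := μ) (As := ((↑) : 𝒰 → Set X))
    (fun U ↦ (hopen U U.2).1.measurableSet) (hdisj.subtype _ _)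
  have hall : {U : 𝒰 | 0 < μ U} = univ :=
    eq_univ_of_forall fun U ↦ (hopen U U.2).1.measure_pos μ (hopen U U.2).2
  rwa [hall, countable_univ_iff, countable_coe_iff] at hpos

theorem Dense.disjoint_of_disjoint_preimage_val {s : Set X} (hs : Dense s) {U V : Set X}
    (hU : IsOpen U) (hV : IsOpen V)
    (h : Disjoint (((↑) : s → X) ⁻¹' U) ((↑) ⁻¹' V)) : Disjoint U V := by
  rw [disjoint_iff_inter_eq_empty, ← not_nonempty_iff_eq_empty]
  intro hUV
  obtain ⟨x, hxUV, hxs⟩ := hs.inter_open_nonempty _ (hU.inter hV) hUV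
  exact h.ne_of_mem (a := ⟨x, hxs⟩) hxUV.1 hxUV.2 rfl

theorem HasCountableCellularity.of_dense (h : HasCountableCellularity X) {s : Set X}
    (hs : Dense s) : HasCountableCellularity s := by
  intro 𝒰 hopen hdisj
  have hext : ∀ U : Set s, ∃ V : Set X, IsOpen U → IsOpen V ∧ (↑) ⁻¹' V = U := fun U ↦ by
    by_cases hU : IsOpen U
    · obtain ⟨V, hV, hVU⟩ := isOpen_induced_iff.mp hU
      exact ⟨V, fun _ ↦ ⟨hV, hVU⟩⟩
    · exact ⟨∅, fun hU' ↦ absurd hU' hU⟩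
  choose V hV using hext
  have hV_open (U) (hU : U ∈ 𝒰) : IsOpen (V U) := (hV U (hopen U hU).1).1
  have hV_preimage (U) (hU : U ∈ 𝒰) : (↑) ⁻¹' V U = U := (hV U (hopen U hU).1).2
  refine (mapsTo_image V 𝒰).countable_of_injOn (fun U hU W hW hUW ↦ ?_) (h _ ?_ ?_)
  · rw [← hV_preimage U hU, ← hV_preimage W hW, hUW]
  · rintro _ ⟨U, hU, rfl⟩
    obtain ⟨x, hx⟩ := (hopen U hU).2
    exact ⟨hV_open U hU, x, by rwa [← hV_preimage U hU] at hx⟩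
  · rintro _ ⟨U, hU, rfl⟩ _ ⟨W, hW, rfl⟩ hne
    show Disjoint (V U) (V W)
    refine hs.disjoint_of_disjoint_preimage_val (hV_open U hU) (hV_open W hW) ?_
    rw [hV_preimage U hU, hV_preimage W hW]
    exact hdisj hU hW fun hUW ↦ hne (congrArg V hUW)

end

theorem IsTopologicalGroup.hasCountableCellularity_of_compactSpace {K : Type*} [Group K]
    [TopologicalSpace K] [IsTopologicalGroup K] [CompactSpace K] : HasCountableCellularity K := by
  borelize K
  exact hasCountableCellularity_of_isOpenPosMeasure (Measure.haar : Measure K)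

theorem stmt6_general {K : Type*} [Group K] [TopologicalSpace K] [IsTopologicalGroup K]
    [CompactSpace K] (G : Subgroup K) (hdense : Dense (G : Set K))
    (𝒰 : Set (Set G)) (hopen : ∀ U ∈ 𝒰, IsOpen U ∧ U.Nonempty)
    (hdisj : 𝒰.PairwiseDisjoint id) :
    𝒰.Countable :=
  IsTopologicalGroup.hasCountableCellularity_of_compactSpace.of_dense hdense 𝒰 hopen hdisj

/-- Every dense subgroup of a compact Hausdorff topological group has countable
cellularity: every pairwise disjoint family of nonempty open subsets is countable. -/
theorem stmt6 {K : Type*} [Group K] [TopologicalSpace K] [IsTopologicalGroup K]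
    [CompactSpace K] [T2Space K] (G : Subgroup K) (hdense : Dense (G : Set K))
    (𝒰 : Set (Set G)) (hopen : ∀ U ∈ 𝒰, IsOpen U ∧ U.Nonempty)
    (hdisj : 𝒰.PairwiseDisjoint id) :
    𝒰.Countable :=
  stmt6_general G hdense 𝒰 hopen hdisj
end

section
/- If G is a dense Baire subgroup of a compact abelian group K, then every sequence of continuous characters χₙ : G → ℂ (circle-valued) that converges pointwise on G is eventually constant. -/
open Filter Complex Set Pointwise

/-- For unimodular complex numbers, `|ab - a'b'| ≤ |a - a'| + |b - b'|`. -/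
private lemma abs_mul_sub_mul (a b a' b' : ℂ) (ha' : ‖a'‖ = 1)
    (hb : ‖b‖ = 1) :
    ‖a * b - a' * b'‖ ≤ ‖a - a'‖ + ‖b - b'‖ := by
  have h : a * b - a' * b' = (a - a') * b + a' * (b - b') := by ring
  rw [h]
  calc ‖(a - a') * b + a' * (b - b')‖
      ≤ ‖(a - a') * b‖ + ‖a' * (b - b')‖ := norm_add_le _ _
    _ = ‖a - a'‖ + ‖b - b'‖ := by
        rw [norm_mul, norm_mul, ha', hb, mul_one, one_mul]

private lemma abs_inv_sub_inv (a b : ℂ) (ha : ‖a‖ = 1) (hb : ‖b‖ = 1) :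
    ‖a⁻¹ - b⁻¹‖ = ‖a - b‖ := by
  have ha0 : a ≠ 0 := by intro h; rw [h] at ha; simp at ha
  have hb0 : b ≠ 0 := by intro h; rw [h] at hb; simp at hb
  have h : a⁻¹ - b⁻¹ = (b - a) / (a * b) := by field_simp
  rw [h, norm_div, norm_mul, ha, hb, mul_one, div_one, norm_sub_rev]

/-- A nontrivial element of the circle has a power with nonpositive real part. -/
private lemma exists_pow_re_nonpos (z : Circle) (hz : z ≠ 1) :
    ∃ j : ℕ, ((z ^ j : Circle) : ℂ).re ≤ 0 := by
  set θ := Complex.arg (z : ℂ) with hθ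
  have hz1 : (z : ℂ) = Complex.exp (θ * Complex.I) := by
    conv_lhs => rw [← Complex.norm_mul_exp_arg_mul_I (z : ℂ)]
    rw [Circle.norm_coe, Complex.ofReal_one, one_mul]
  have hθ0 : θ ≠ 0 := by
    intro h
    apply hz
    ext
    rw [hz1, h, Circle.coe_one]
    simp
  have hθpi : |θ| ≤ Real.pi := Complex.abs_arg_le_pi _
  have hpos : (0 : ℝ) < |θ| := abs_pos.2 hθ0
  set j : ℕ := ⌈(Real.pi / 2) / |θ|⌉₊ with hj
  have h1 : Real.pi / 2 ≤ (j : ℝ) * |θ| := by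
    rw [← div_le_iff₀ hpos]
    exact Nat.le_ceil _
  have h2 : (j : ℝ) * |θ| ≤ Real.pi + Real.pi / 2 := by
    have hlt : (j : ℝ) < (Real.pi / 2) / |θ| + 1 :=
      Nat.ceil_lt_add_one (by positivity)
    have hcan : (Real.pi / 2) / |θ| * |θ| = Real.pi / 2 :=
      div_mul_cancel₀ _ (ne_of_gt hpos)
    nlinarith
  refine ⟨j, ?_⟩
  have hc : ((z ^ j : Circle) : ℂ) = Complex.exp (((j : ℝ) * θ : ℝ) * Complex.I) := by
    have : ((z ^ j : Circle) : ℂ) = (z : ℂ) ^ j := map_pow Circle.coeHom z j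
    rw [this, hz1, ← Complex.exp_nat_mul]
    push_cast
    ring_nf
  rw [hc, Complex.exp_ofReal_mul_I_re]
  have habs : |(j : ℝ) * θ| = (j : ℝ) * |θ| := by
    rw [abs_mul, Nat.abs_cast]
  rw [← Real.cos_abs, habs]
  exact Real.cos_nonpos_of_pi_div_two_le_of_le h1 (by linarith)

/-- If `G` is a dense Baire subgroup of a compact Hausdorff abelian group `K`, then every
sequence of continuous characters `χₙ : G → 𝕋` that converges pointwise on `G` is
eventually constant. -/
theorem stmt7 {K : Type*} [CommGroup K] [TopologicalSpace K] [IsTopologicalGroup K]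
    [CompactSpace K] [T2Space K] (G : Subgroup K) (hdense : Dense (G : Set K))
    [BaireSpace G] (χ : ℕ → ContinuousMonoidHom G Circle)
    (hconv : ∀ x : G, ∃ l : Circle,
      Filter.Tendsto (fun n => χ n x) Filter.atTop (nhds l)) :
    ∃ N, ∀ m ≥ N, χ m = χ N := by
  classical
  haveI : Nonempty G := ⟨1⟩
  set c : ℝ := 1 / 8 with hc
  -- pointwise Cauchy estimates
  have hCau : ∀ x : G, ∃ Nx : ℕ, ∀ m, Nx ≤ m → ∀ n, Nx ≤ n →
      ‖(χ m x : ℂ) - (χ n x : ℂ)‖ ≤ c := by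
    intro x
    obtain ⟨l, hl⟩ := hconv x
    have hl' : Filter.Tendsto (fun n => ((χ n x : ℂ))) Filter.atTop (nhds (l : ℂ)) :=
      (continuous_induced_dom.tendsto l).comp hl
    have hcs : CauchySeq fun n => ((χ n x : ℂ)) := hl'.cauchySeq
    obtain ⟨N, hN⟩ := Metric.cauchySeq_iff.1 hcs c (by norm_num [hc])
    exact ⟨N, fun m hm n hn => by
      have := hN m hm n hn
      rw [Complex.dist_eq] at this
      exact le_of_lt this⟩
  -- the closed sets for the Baire argument
  set F : ℕ → Set G := fun N => {x : G | ∀ m, N ≤ m → ∀ n, N ≤ n →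
      ‖(χ m x : ℂ) - (χ n x : ℂ)‖ ≤ c} with hF
  have hFclosed : ∀ N, IsClosed (F N) := by
    intro N
    have hrw : F N = ⋂ m, ⋂ (_ : N ≤ m), ⋂ n, ⋂ (_ : N ≤ n),
        {x : G | ‖(χ m x : ℂ) - (χ n x : ℂ)‖ ≤ c} := by
      ext x; simp [hF]
    rw [hrw]
    refine isClosed_iInter fun m => isClosed_iInter fun _ =>
      isClosed_iInter fun n => isClosed_iInter fun _ => ?_
    have hcont : Continuous fun x : G => ‖(χ m x : ℂ) - (χ n x : ℂ)‖ :=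
      continuous_norm.comp
        ((continuous_induced_dom.comp (χ m).continuous).sub
          (continuous_induced_dom.comp (χ n).continuous))
    exact isClosed_le hcont continuous_const
  have hcover : ⋃ N, F N = Set.univ := by
    apply Set.eq_univ_of_forall
    intro x
    obtain ⟨Nx, hNx⟩ := hCau x
    exact Set.mem_iUnion.2 ⟨Nx, hNx⟩
  obtain ⟨N₀, hN₀⟩ := nonempty_interior_of_iUnion_of_closed hFclosed hcover
  obtain ⟨x₀, hx₀⟩ := hN₀
  have hx₀F : x₀ ∈ F N₀ := interior_subset hx₀
  -- get a neighborhood of 1 in G mapped into interior (F N₀) by (· * x₀)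
  have hmem : (fun y : G => y * x₀) ⁻¹' interior (F N₀) ∈ nhds (1 : G) := by
    have hcont : Continuous fun y : G => y * x₀ := continuous_id.mul continuous_const
    have : interior (F N₀) ∈ nhds ((1 : G) * x₀) := by
      rw [one_mul]; exact isOpen_interior.mem_nhds hx₀
    exact hcont.continuousAt.preimage_mem_nhds this
  rw [nhds_subtype_eq_comap, Filter.mem_comap] at hmem
  obtain ⟨t, ht, hts⟩ := hmem
  rw [OneMemClass.coe_one] at ht
  set s : Set K := interior t with hs
  have hs1 : (1 : K) ∈ s := mem_interior_iff_mem_nhds.2 ht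
  have hsopen : IsOpen s := isOpen_interior
  -- cover K by translates of s centered in G
  have hcov : (Set.univ : Set K) ⊆ ⋃ g : G, (g : K) • s := by
    intro k _
    have hUopen : IsOpen (k • s⁻¹) := (hsopen.inv).smul k
    have hkU : k ∈ k • s⁻¹ := by
      rw [Set.mem_smul_set_iff_inv_smul_mem, smul_eq_mul, inv_mul_cancel]
      rw [Set.mem_inv, inv_one]
      exact hs1
    obtain ⟨gk, hgG, hgU⟩ := hdense.exists_mem_open hUopen ⟨k, hkU⟩
    refine Set.mem_iUnion.2 ⟨⟨gk, hgG⟩, ?_⟩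
    rw [Set.mem_smul_set_iff_inv_smul_mem, smul_eq_mul]
    rw [Set.mem_smul_set_iff_inv_smul_mem, smul_eq_mul, Set.mem_inv] at hgU
    simpa [mul_comm] using hgU
  obtain ⟨T, hT⟩ := isCompact_univ.elim_finite_subcover
    (fun g : G => (g : K) • s) (fun g => hsopen.smul _) hcov
  -- choose uniform index
  set Nf : G → ℕ := fun x => (hCau x).choose with hNf
  set N' : ℕ := max N₀ (T.sup Nf) with hN'
  have hN'0 : N₀ ≤ N' := le_max_left _ _
  -- the key uniform bound
  have key : ∀ m, N' ≤ m → ∀ n, N' ≤ n → ∀ x : G,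
      ‖(χ m x : ℂ) - (χ n x : ℂ)‖ ≤ 3 * c := by
    intro m hm n hn x
    obtain ⟨g, hgT, hxg⟩ : ∃ g ∈ T, (x : K) ∈ (g : K) • s := by
      have := hT (Set.mem_univ (x : K))
      simpa using this
    set w : G := g⁻¹ * x with hw
    have hwt : (w : K) ∈ t := by
      rw [Set.mem_smul_set_iff_inv_smul_mem, smul_eq_mul] at hxg
      have : (w : K) = (g : K)⁻¹ * (x : K) := by push_cast [hw]; ring
      rw [this]
      exact interior_subset hxg
    have hwF : w * x₀ ∈ F N₀ := interior_subset (hts hwt)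
    have hgN : Nf g ≤ N' := le_trans (Finset.le_sup hgT) (le_max_right _ _)
    have hb1 : ‖(χ m g : ℂ) - (χ n g : ℂ)‖ ≤ c :=
      (hCau g).choose_spec m (le_trans hgN hm) n (le_trans hgN hn)
    have hb2 : ‖(χ m (w * x₀) : ℂ) - (χ n (w * x₀) : ℂ)‖ ≤ c :=
      hwF m (le_trans hN'0 hm) n (le_trans hN'0 hn)
    have hb3 : ‖(χ m x₀ : ℂ) - (χ n x₀ : ℂ)‖ ≤ c :=
      hx₀F m (le_trans hN'0 hm) n (le_trans hN'0 hn)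
    have hb3' : ‖(χ m x₀⁻¹ : ℂ) - (χ n x₀⁻¹ : ℂ)‖ ≤ c := by
      rw [map_inv, map_inv, Circle.coe_inv, Circle.coe_inv,
        abs_inv_sub_inv _ _ (Circle.norm_coe _) (Circle.norm_coe _)]
      exact hb3
    have hx : x = g * ((w * x₀) * x₀⁻¹) := by
      rw [hw]; group
    rw [hx]
    have e : ∀ k : ℕ, (χ k (g * (w * x₀ * x₀⁻¹)) : ℂ) =
        (χ k g : ℂ) * ((χ k (w * x₀) : ℂ) * (χ k x₀⁻¹ : ℂ)) := by
      intro k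
      rw [map_mul, map_mul, Circle.coe_mul, Circle.coe_mul]
    rw [e m, e n]
    calc ‖(χ m g : ℂ) * ((χ m (w * x₀) : ℂ) * (χ m x₀⁻¹ : ℂ))
          - (χ n g : ℂ) * ((χ n (w * x₀) : ℂ) * (χ n x₀⁻¹ : ℂ))‖
        ≤ ‖(χ m g : ℂ) - (χ n g : ℂ)‖
          + ‖(χ m (w * x₀) : ℂ) * (χ m x₀⁻¹ : ℂ)
              - (χ n (w * x₀) : ℂ) * (χ n x₀⁻¹ : ℂ)‖ := by
          apply abs_mul_sub_mul _ _ _ _ (Circle.norm_coe _)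
          rw [norm_mul, Circle.norm_coe, Circle.norm_coe, mul_one]
      _ ≤ ‖(χ m g : ℂ) - (χ n g : ℂ)‖
          + (‖(χ m (w * x₀) : ℂ) - (χ n (w * x₀) : ℂ)‖
            + ‖(χ m x₀⁻¹ : ℂ) - (χ n x₀⁻¹ : ℂ)‖) := by
          gcongr
          exact abs_mul_sub_mul _ _ _ _ (Circle.norm_coe _) (Circle.norm_coe _)
      _ ≤ c + (c + c) := by gcongr
      _ = 3 * c := by ring
  -- conclude: all characters with index ≥ N' coincide
  refine ⟨N', fun m hm => ?_⟩
  apply ContinuousMonoidHom.ext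
  intro x
  by_contra hne
  have hz : χ m x / χ N' x ≠ 1 := by
    intro h
    exact hne (div_eq_one.1 h)
  obtain ⟨j, hj⟩ := exists_pow_re_nonpos _ hz
  have h1 : (χ m x / χ N' x) ^ j = χ m (x ^ j) / χ N' (x ^ j) := by
    rw [div_pow, map_pow, map_pow]
  rw [h1, Circle.coe_div] at hj
  set a : ℂ := (χ m (x ^ j) : ℂ) with ha
  set b : ℂ := (χ N' (x ^ j) : ℂ) with hb
  have h2 : ‖a - b‖ ≤ 3 * c := key m hm N' le_rfl (x ^ j)
  have hb0 : b ≠ 0 := Circle.coe_ne_zero _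
  have hab : ‖a / b - 1‖ ≤ 3 * c := by
    have : a / b - 1 = (a - b) / b := by field_simp
    rw [this, norm_div, Circle.norm_coe, div_one]
    exact h2
  have h3 : 1 - (a / b).re ≤ 3 * c := by
    calc 1 - (a / b).re = (1 - a / b).re := by simp
      _ ≤ |(1 - a / b).re| := le_abs_self _
      _ ≤ ‖1 - a / b‖ := Complex.abs_re_le_norm _
      _ = ‖a / b - 1‖ := norm_sub_rev _ _
      _ ≤ 3 * c := hab
  have : (a / b).re ≤ 0 := hj
  rw [hc] at h3
  linarith
end

section
/- Let {hₙ : n ∈ ℕ} be continuous homomorphisms from a topological group G to a topological group H. If the set of x ∈ G for which (hₙ(x)) is a Cauchy sequence in H is non-meager in G, then the family {hₙ} is equicontinuous at the identity. -/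
/-!
Fix `V ∈ 𝓝 1` and a closed `K ∈ 𝓝 1` with `K * K * K ⊆ V`. The Cauchy set is contained in the
countable union of the closed sets `E N := tailCauchySet h K N` of points whose tail from `N`
is `K`-Cauchy, so some `E N` is non-meagre and hence has an interior point `x₀`. For `u` near `1`
we have `u * x₀ ∈ E N` and `h k u ∈ K` for the finitely many `k ≤ N`; for `n ≥ N` the identity
`h n u = (h n (u x₀) (h N (u x₀))⁻¹) · h N u · (h N x₀ (h n x₀)⁻¹)`
then puts `h n u` in `K * K * K`.
-/

open Filter Topology Pointwise

theorem exists_nonempty_interior_of_not_isMeagre_iUnion {X ι : Type*} [TopologicalSpace X]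
    [Countable ι] {s : ι → Set X} (hs : ∀ i, IsClosed (s i)) (hm : ¬ IsMeagre (⋃ i, s i)) :
    ∃ i, (interior (s i)).Nonempty := by
  by_contra! hempty
  exact hm <| isMeagre_iUnion fun i =>
    ((hs i).isNowhereDense_iff.2 (hempty i)).isMeagre

theorem exists_isClosed_nhds_one_mul_mul_subset {H : Type*} [Group H] [TopologicalSpace H]
    [IsTopologicalGroup H] {V : Set H} (hV : V ∈ 𝓝 1) :
    ∃ K ∈ 𝓝 (1 : H), IsClosed K ∧ K * K * K ⊆ V := by
  obtain ⟨W, hWo, hW1, hWV⟩ := exists_open_nhds_one_mul_subset hV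
  obtain ⟨K, hK, hKc, -, hKW⟩ := exists_closed_nhds_one_inv_eq_mul_subset (hWo.mem_nhds hW1)
  have hK1 : (1 : H) ∈ K := mem_of_mem_nhds hK
  refine ⟨K, hK, hKc, (Set.mul_subset_mul hKW fun k hk => hKW ?_).trans hWV⟩
  simpa using Set.mul_mem_mul hk hK1

section TailCauchy

variable {X H : Type*} [Group H]

def tailCauchySet (f : ℕ → X → H) (K : Set H) (N : ℕ) : Set X :=
  {x | ∀ m ≥ N, ∀ n ≥ N, f m x * (f n x)⁻¹ ∈ K}

theorem isClosed_tailCauchySet [TopologicalSpace X] [TopologicalSpace H] [ContinuousMul H]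
    [ContinuousInv H] {f : ℕ → X → H} (hf : ∀ n, Continuous (f n)) {K : Set H} (hK : IsClosed K)
    (N : ℕ) : IsClosed (tailCauchySet f K N) := by
  simp only [tailCauchySet, Set.ofPred_forall]
  exact isClosed_iInter fun m => isClosed_iInter fun _ => isClosed_iInter fun n =>
    isClosed_iInter fun _ => hK.preimage ((hf m).mul (hf n).inv)

theorem MonoidHom.apply_eq_mul_mul_of_translate {G : Type*} [Group G] (φ ψ : G →* H) (u x : G) :
    φ u = φ (u * x) * (ψ (u * x))⁻¹ * ψ u * (ψ x * (φ x)⁻¹) := by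
  simp only [map_mul]
  group

theorem MonoidHom.apply_mem_mul_mul_of_mem_tailCauchySet {G : Type*} [Group G] {h : ℕ → G →* H}
    {K : Set H} (hK1 : 1 ∈ K) {N : ℕ} {x₀ u : G} (hx₀ : x₀ ∈ tailCauchySet (fun n => h n) K N)
    (hux₀ : u * x₀ ∈ tailCauchySet (fun n => h n) K N) (hu : ∀ k ≤ N, h k u ∈ K) (n : ℕ) :
    h n u ∈ K * K * K := by
  rcases le_total n N with hn | hn
  · simpa using Set.mul_mem_mul (Set.mul_mem_mul hK1 (hu n hn)) hK1
  · rw [(h n).apply_eq_mul_mul_of_translate (h N) u x₀]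
    exact Set.mul_mem_mul (Set.mul_mem_mul (hux₀ n hn N le_rfl) (hu N le_rfl))
      (hx₀ N le_rfl n hn)

end TailCauchy

/-- If `hₙ : G → H` are continuous homomorphisms of topological groups and the set of
`x ∈ G` such that `(hₙ x)` is a Cauchy sequence in `H` is non-meager in `G`, then the
family `{hₙ}` is equicontinuous at the identity. -/
theorem stmt8 {G H : Type*} [Group G] [TopologicalSpace G] [IsTopologicalGroup G]
    [Group H] [TopologicalSpace H] [IsTopologicalGroup H]
    (h : ℕ → G →* H) (hcont : ∀ n, Continuous (h n))
    (hnm : ¬ IsMeagre {x : G | ∀ V ∈ nhds (1 : H),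
      ∃ N, ∀ m ≥ N, ∀ n ≥ N, h m x * (h n x)⁻¹ ∈ V}) :
    ∀ V ∈ nhds (1 : H), ∃ U ∈ nhds (1 : G), ∀ n, ∀ x ∈ U, h n x ∈ V := by
  intro V hV
  obtain ⟨K, hK, hKc, hKV⟩ := exists_isClosed_nhds_one_mul_mul_subset hV
  obtain ⟨N, x₀, hx₀⟩ := exists_nonempty_interior_of_not_isMeagre_iUnion
    (isClosed_tailCauchySet hcont hKc) fun hm =>
      hnm <| hm.mono fun x hx => Set.mem_iUnion.2 (hx K hK)
  have htranslate : ∀ᶠ u in 𝓝 (1 : G), u * x₀ ∈ tailCauchySet (fun n => h n) K N :=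
    ((continuous_mul_const x₀).tendsto' 1 x₀ (one_mul x₀)).eventually
      (mem_interior_iff_mem_nhds.1 hx₀)
  have hinitial : ∀ᶠ u in 𝓝 (1 : G), ∀ k ≤ N, h k u ∈ K :=
    (eventually_all_finite (Set.finite_le_nat N)).2 fun k _ =>
      ((hcont k).tendsto' 1 1 (map_one _)).eventually hK
  obtain ⟨U, hU, hUK⟩ := (htranslate.and hinitial).exists_mem
  exact ⟨U, hU, fun n u hu => hKV <| MonoidHom.apply_mem_mul_mul_of_mem_tailCauchySet
    (mem_of_mem_nhds hK) (interior_subset hx₀) (hUK u hu).1 (hUK u hu).2 n⟩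
end

section
/- Every Baire topological group with a countable network is separable and metrizable (indeed second countable). -/
/-!
Applying the Baire category theorem inside an arbitrary nonempty open set `V` shows that some
network element `N ⊆ V` has a closure with nonempty interior. In a topological group, the open
sets `O / O` with `O = interior (closure N)` for such `N` therefore form a countable
neighbourhood basis of `1`, so the group is metrizable by Birkhoff–Kakutani. A countable network
always yields a countable dense set, and a separable metrizable space is second countable.
-/

open Filter Set TopologicalSpace Topology Pointwise

def IsNetwork {X : Type*} [TopologicalSpace X] (𝒩 : Set (Set X)) : Prop :=
  ∀ (x : X) (U : Set X), IsOpen U → x ∈ U → ∃ N ∈ 𝒩, x ∈ N ∧ N ⊆ U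

namespace IsNetwork

variable {X : Type*} [TopologicalSpace X] {𝒩 : Set (Set X)}

theorem separableSpace (h𝒩 : IsNetwork 𝒩) (hc : 𝒩.Countable) : SeparableSpace X := by
  let 𝒩₀ : Set (Set X) := {N ∈ 𝒩 | N.Nonempty}
  have : Countable 𝒩₀ := (hc.mono (sep_subset _ _)).to_subtype
  refine ⟨⟨range fun N : 𝒩₀ => N.2.2.some, countable_range _, ?_⟩⟩
  refine dense_iff_inter_open.2 fun U hU ⟨x, hx⟩ => ?_
  obtain ⟨N, hN𝒩, hxN, hNU⟩ := h𝒩 x U hU hx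
  let N₀ : 𝒩₀ := ⟨N, hN𝒩, x, hxN⟩
  exact ⟨_, hNU N₀.2.2.some_mem, N₀, rfl⟩

theorem exists_subset_interior_closure_nonempty [BaireSpace X] (h𝒩 : IsNetwork 𝒩)
    (hc : 𝒩.Countable) {V : Set X} (hV : IsOpen V) (hVne : V.Nonempty) :
    ∃ N ∈ 𝒩, N ⊆ V ∧ (interior (closure N)).Nonempty := by
  let S : Set (Set X) := insert Vᶜ (closure '' {N ∈ 𝒩 | N ⊆ V})
  have hSc : S.Countable := ((hc.mono (sep_subset _ _)).image _).insert _
  have hS_closed : ∀ s ∈ S, IsClosed s := by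
    rintro s (rfl | ⟨N, -, rfl⟩)
    · exact hV.isClosed_compl
    · exact isClosed_closure
  have hS_cover : ⋃₀ S = univ := by
    refine eq_univ_of_forall fun x => ?_
    by_cases hx : x ∈ V
    · obtain ⟨N, hN𝒩, hxN, hNV⟩ := h𝒩 x V hV hx
      exact ⟨closure N, Or.inr ⟨N, ⟨hN𝒩, hNV⟩, rfl⟩, subset_closure hxN⟩
    · exact ⟨Vᶜ, Or.inl rfl, hx⟩
  obtain ⟨x, hxV, hx⟩ :=
    (dense_sUnion_interior_of_closed hS_closed hSc hS_cover).inter_open_nonempty V hV hVne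
  obtain ⟨s, hsS, hxs⟩ := mem_iUnion₂.1 hx
  rcases hsS with rfl | ⟨N, ⟨hN𝒩, hNV⟩, rfl⟩
  · exact absurd hxV (interior_subset hxs)
  · exact ⟨N, hN𝒩, hNV, x, hxs⟩

theorem hasCountableBasis_nhds_one {G : Type*} [Group G] [TopologicalSpace G]
    [IsTopologicalGroup G] [BaireSpace G] {𝒩 : Set (Set G)} (h𝒩 : IsNetwork 𝒩)
    (hc : 𝒩.Countable) :
    (𝓝 (1 : G)).HasCountableBasis (fun N => N ∈ 𝒩 ∧ (interior (closure N)).Nonempty)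
      (fun N => interior (closure N) / interior (closure N)) := by
  refine ⟨⟨fun U => ⟨fun hU => ?_, ?_⟩⟩, hc.mono fun N hN => hN.1⟩
  · obtain ⟨W, hW, hWU⟩ := exists_nhds_split_inv hU
    -- a closed neighbourhood `C ⊆ W`, so that the closure of a network element inside it stays in `W`
    obtain ⟨C, hC, hC_closed, hCW⟩ := exists_mem_nhds_isClosed_subset hW
    obtain ⟨N, hN𝒩, hNC, hN⟩ := h𝒩.exists_subset_interior_closure_nonempty hc isOpen_interior
      ⟨1, mem_interior_iff_mem_nhds.2 hC⟩
    have hNW : interior (closure N) ⊆ W :=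
      interior_subset.trans <| (closure_minimal (hNC.trans interior_subset) hC_closed).trans hCW
    refine ⟨N, ⟨hN𝒩, hN⟩, ?_⟩
    rintro _ ⟨a, ha, b, hb, rfl⟩
    exact hWU a (hNW ha) b (hNW hb)
  · rintro ⟨N, ⟨-, w, hw⟩, hNU⟩
    exact mem_of_superset (isOpen_interior.div_left.mem_nhds ⟨w, hw, w, hw, div_self' w⟩) hNU

end IsNetwork

section BirkhoffKakutani

variable {G : Type*} [Group G] [TopologicalSpace G] [IsTopologicalGroup G]
  [(𝓝 (1 : G)).IsCountablyGenerated]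

attribute [local instance] IsTopologicalGroup.rightUniformSpace

theorem IsTopologicalGroup.isCountablyGenerated_rightUniformity :
    (uniformity G).IsCountablyGenerated := by
  rw [uniformity_eq_comap_nhds_one']
  exact comap.isCountablyGenerated _ _

theorem IsTopologicalGroup.metrizableSpace_of_isCountablyGenerated_nhds_one [T0Space G] :
    MetrizableSpace G :=
  have := IsTopologicalGroup.isCountablyGenerated_rightUniformity (G := G)
  UniformSpace.metrizableSpace

theorem IsTopologicalGroup.secondCountableTopology_of_isCountablyGenerated_nhds_one
    [SeparableSpace G] : SecondCountableTopology G :=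
  have := IsTopologicalGroup.isCountablyGenerated_rightUniformity (G := G)
  UniformSpace.secondCountable_of_separable G

end BirkhoffKakutani

/-- Every Baire topological group with a countable network is separable and metrizable,
indeed second countable. -/
theorem stmt9 {G : Type*} [Group G] [TopologicalSpace G] [IsTopologicalGroup G] [T2Space G]
    [BaireSpace G] (𝒩 : Set (Set G)) (hcount : 𝒩.Countable)
    (hnet : ∀ (x : G) (U : Set G), IsOpen U → x ∈ U → ∃ N ∈ 𝒩, x ∈ N ∧ N ⊆ U) :
    TopologicalSpace.SeparableSpace G ∧ TopologicalSpace.MetrizableSpace G ∧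
      SecondCountableTopology G := by
  have h𝒩 : IsNetwork 𝒩 := hnet
  have := h𝒩.separableSpace hcount
  have := (h𝒩.hasCountableBasis_nhds_one hcount).isCountablyGenerated
  exact ⟨‹_›, IsTopologicalGroup.metrizableSpace_of_isCountablyGenerated_nhds_one,
    IsTopologicalGroup.secondCountableTopology_of_isCountablyGenerated_nhds_one⟩
end

section
/- If a topological group G is a Baire space and has a countable network of closed sets, then G is first countable. -/
/-!
Closed sets have nowhere dense frontiers, so by the Baire property some point `x` avoids the
frontiers of all (countably many) members of the network. Every member containing `x` is then a
neighbourhood of `x`, and their interiors form a countable neighbourhood basis at `x`. Translations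
are homeomorphisms, so this basis moves to every point of the group.
-/

open Filter Set Topology

theorem dense_setOf_forall_mem_interior_of_countable {X : Type*} [TopologicalSpace X]
    [BaireSpace X] {𝒩 : Set (Set X)} (hcount : 𝒩.Countable) (hclosed : ∀ N ∈ 𝒩, IsClosed N) :
    Dense {x | ∀ N ∈ 𝒩, x ∈ N → x ∈ interior N} := by
  have hdense : Dense (⋂ N ∈ 𝒩, (frontier N)ᶜ) :=
    dense_biInter_of_isOpen (fun N _ => isClosed_frontier.isOpen_compl) hcount
      fun N hN => interior_eq_empty_iff_dense_compl.mp (interior_frontier (hclosed N hN))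
  refine hdense.mono fun x hx N hN hxN => ?_
  rw [← self_sdiff_frontier N]
  exact ⟨hxN, mem_iInter₂.mp hx N hN⟩

theorem isCountablyGenerated_nhds_of_countable_network {X : Type*} [TopologicalSpace X] {x : X}
    {𝒩 : Set (Set X)} (hcount : 𝒩.Countable)
    (hnet : ∀ U : Set X, IsOpen U → x ∈ U → ∃ N ∈ 𝒩, x ∈ N ∧ N ⊆ U)
    (hint : ∀ N ∈ 𝒩, x ∈ N → x ∈ interior N) :
    (𝓝 x).IsCountablyGenerated := by
  have : Countable 𝒩 := hcount.to_subtype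
  have hbasis : (𝓝 x).HasBasis (fun N : 𝒩 => x ∈ (N : Set X)) (fun N => interior N) :=
    (nhds_basis_opens x).to_hasBasis
      (fun U ⟨hxU, hU⟩ =>
        let ⟨N, hN, hxN, hNU⟩ := hnet U hU hxU
        ⟨⟨N, hN⟩, hxN, interior_subset.trans hNU⟩)
      fun N hxN => ⟨interior N, ⟨hint N N.2 hxN, isOpen_interior⟩, subset_rfl⟩
  exact hbasis.isCountablyGenerated

theorem firstCountableTopology_of_isCountablyGenerated_nhds {G : Type*} [Group G]
    [TopologicalSpace G] [SeparatelyContinuousMul G] (x : G) [(𝓝 x).IsCountablyGenerated] :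
    FirstCountableTopology G := by
  refine ⟨fun y => ?_⟩
  have htranslate : map (y * x⁻¹ * ·) (𝓝 x) = 𝓝 y := by
    simpa using (Homeomorph.mulLeft (y * x⁻¹)).map_nhds_eq x
  rw [← htranslate]
  infer_instance

theorem stmt10_general {G : Type*} [Group G] [TopologicalSpace G] [IsTopologicalGroup G]
    [BaireSpace G] (𝒩 : Set (Set G)) (hcount : 𝒩.Countable)
    (hclosed : ∀ N ∈ 𝒩, IsClosed N)
    (hnet : ∀ (x : G) (U : Set G), IsOpen U → x ∈ U → ∃ N ∈ 𝒩, x ∈ N ∧ N ⊆ U) :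
    FirstCountableTopology G := by
  obtain ⟨x, hx⟩ := (dense_setOf_forall_mem_interior_of_countable hcount hclosed).nonempty
  have := isCountablyGenerated_nhds_of_countable_network hcount (hnet x) hx
  exact firstCountableTopology_of_isCountablyGenerated_nhds x

/-- If a topological group `G` is a Baire space and has a countable network consisting of
closed sets, then `G` is first countable. -/
theorem stmt10 {G : Type*} [Group G] [TopologicalSpace G] [IsTopologicalGroup G] [T2Space G]
    [BaireSpace G] (𝒩 : Set (Set G)) (hcount : 𝒩.Countable)
    (hclosed : ∀ N ∈ 𝒩, IsClosed N)
    (hnet : ∀ (x : G) (U : Set G), IsOpen U → x ∈ U → ∃ N ∈ 𝒩, x ∈ N ∧ N ⊆ U) :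
    FirstCountableTopology G :=
  stmt10_general 𝒩 hcount hclosed hnet
end

section
/- Let K be a closed pseudocompact normal subgroup of a totally bounded Hausdorff topological group G. If the quotient group G/K is a Baire space, then G is a Baire space. -/
/-!
Sieve argument, valid for any continuous open map `q : X → Y` from a regular space onto a Baire
space whose fibres are feebly compact (here `q : G → G ⧸ K`, fibres `gK ≃ K`). Given dense open
`Uₙ` and a nonempty open `W`, Zorn's lemma gives, level by level, families of open sets whose
closures refine the previous level inside `Uₙ` and whose images are pairwise disjoint with dense
union in the image of the previous level. Baire's theorem in `Y` yields a point `y` in the image of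
every level; disjointness makes the sets whose image contains `y` a single decreasing branch, each
meeting the fibre over `y`. Feeble compactness of that fibre gives a common closure point of the
branch, which lies in `W ∩ ⋂ₙ Uₙ`. A pseudocompact topological group is feebly compact since an
infinite locally finite family of open sets carries an unbounded sum of bump functions.
-/

open Set Function Pointwise

def Pseudocompact (X : Type*) [TopologicalSpace X] : Prop :=
  ∀ f : X → ℝ, Continuous f → ∃ M : ℝ, ∀ x, |f x| ≤ M

theorem IsTopologicalGroup.completelyRegularSpace (G : Type*) [Group G] [TopologicalSpace G]
    [IsTopologicalGroup G] : CompletelyRegularSpace G :=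
  letI := IsTopologicalGroup.rightUniformSpace G
  inferInstance

section Pseudocompact

variable {X : Type*} [TopologicalSpace X] [CompletelyRegularSpace X]

theorem exists_continuous_nonneg_eq_one_support_subset {P : Set X} (hP : IsOpen P) {x : X}
    (hx : x ∈ P) : ∃ f : X → ℝ, Continuous f ∧ f x = 1 ∧ 0 ≤ f ∧ support f ⊆ P := by
  obtain ⟨f, hf, hfx, hfP⟩ := CompletelyRegularSpace.completely_regular_isOpen x P hP hx
  refine ⟨fun y => 1 - f y, by fun_prop, by simp [hfx], fun y => by simpa using (f y).2.2,
    fun y hy => ?_⟩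
  by_contra hyP
  simp [hfP hyP] at hy

theorem Pseudocompact.not_locallyFinite (hX : Pseudocompact X) {T : ℕ → Set X}
    (hT : ∀ n, IsOpen (T n)) (hne : ∀ n, (T n).Nonempty) : ¬LocallyFinite T := by
  intro hlf
  choose x hx using hne
  choose f hfc hfx hf0 hfT using
    fun n => exists_continuous_nonneg_eq_one_support_subset (hT n) (hx n)
  have hsupp : LocallyFinite fun n : ℕ => support fun y => (n : ℝ) * f n y :=
    hlf.subset fun n => (support_mul_subset_right _ _).trans (hfT n)
  obtain ⟨M, hM⟩ := hX (fun y => ∑ᶠ n : ℕ, (n : ℝ) * f n y)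
    (continuous_finsum (fun n => continuous_const.mul (hfc n)) hsupp)
  obtain ⟨N, hN⟩ := exists_nat_gt M
  have hFN : (N : ℝ) ≤ ∑ᶠ n : ℕ, (n : ℝ) * f n (x N) := by
    simpa [hfx N] using single_le_finsum N (hsupp.point_finite (x N))
      fun n => mul_nonneg n.cast_nonneg (hf0 n _)
  linarith [(abs_le.1 (hM (x N))).2]

theorem Pseudocompact.exists_mem_closure_of_antitone (hX : Pseudocompact X) {T : ℕ → Set X}
    (hT : ∀ n, IsOpen (T n)) (hne : ∀ n, (T n).Nonempty) (hanti : Antitone T) :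
    ∃ p, ∀ n, p ∈ closure (T n) := by
  by_contra! h
  refine hX.not_locallyFinite hT hne fun p => ?_
  obtain ⟨N, hN⟩ := h p
  refine ⟨(closure (T N))ᶜ, isClosed_closure.isOpen_compl.mem_nhds hN,
    (finite_lt_nat N).subset fun n ⟨y, hyT, hyN⟩ => ?_⟩
  by_contra hNn
  exact hyN (subset_closure (hanti (not_lt.1 hNn) hyT))

end Pseudocompact

section OpenSieve

variable {X Y : Type*} [TopologicalSpace X] [TopologicalSpace Y] {q : X → Y}

theorem exists_refinement_pairwiseDisjoint_image [RegularSpace X] (hq : Continuous q)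
    {U : Set X} (hU : IsOpen U) (hUd : Dense U) (𝒜 : Set (Set X)) :
    ∃ 𝒞 : Set (Set X), (∀ B ∈ 𝒞, IsOpen B ∧ ∃ A ∈ 𝒜, closure B ⊆ A ∩ U) ∧
      𝒞.PairwiseDisjoint (q '' ·) ∧
      ∀ A ∈ 𝒜, IsOpen A → q '' A ⊆ closure (⋃ B ∈ 𝒞, q '' B) := by
  obtain ⟨𝒞, ⟨h𝒞, h𝒞d⟩, hmax⟩ := zorn_subset {𝒞 : Set (Set X) |
      (∀ B ∈ 𝒞, IsOpen B ∧ ∃ A ∈ 𝒜, closure B ⊆ A ∩ U) ∧ 𝒞.PairwiseDisjoint (q '' ·)}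
    fun c hc hchain => ⟨⋃₀ c, ⟨fun B ⟨𝒟, h𝒟, hB⟩ => (hc h𝒟).1 B hB,
      (pairwise_sUnion hchain.directedOn).2 fun 𝒟 h𝒟 => (hc h𝒟).2⟩,
      fun _ => subset_sUnion_of_mem⟩
  refine ⟨𝒞, h𝒞, h𝒞d, ?_⟩
  rintro A hA𝒜 hA _ ⟨a, haA, rfl⟩
  refine mem_closure_iff.2 fun O hO haO => not_not.1 fun hmiss => ?_
  obtain ⟨w, ⟨hwA, hwO⟩, hwU⟩ := hUd.inter_open_nonempty _ (hA.inter (hO.preimage hq))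
    ⟨a, haA, haO⟩
  obtain ⟨t, htw, htc, ht⟩ := exists_mem_nhds_isClosed_subset
    (((hA.inter (hO.preimage hq)).inter hU).mem_nhds ⟨⟨hwA, hwO⟩, hwU⟩)
  have hclt : closure (interior t) ⊆ A ∩ q ⁻¹' O ∩ U :=
    (closure_mono interior_subset).trans (htc.closure_eq.symm ▸ ht)
  -- `interior t` maps into `O`, which misses the images of all members of `𝒞`
  have hnew : insert (interior t) 𝒞 ⊆ 𝒞 := by
    refine hmax ⟨?_, h𝒞d.insert fun B hB _ => ?_⟩ (subset_insert _ _)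
    · rintro B (rfl | hB)
      · exact ⟨isOpen_interior, A, hA𝒜, fun x hx => ⟨(hclt hx).1.1, (hclt hx).2⟩⟩
      · exact h𝒞 B hB
    · refine disjoint_left.2 fun z hzt hzB => hmiss ⟨z, ?_, mem_biUnion hB hzB⟩
      obtain ⟨x, hx, rfl⟩ := hzt
      exact (hclt (subset_closure hx)).1.2
  exact hmiss ⟨q w, hwO, mem_biUnion (hnew (mem_insert _ _)) (mem_image_of_mem q
    (mem_interior_iff_mem_nhds.2 htw))⟩

structure OpenSieve (q : X → Y) (W : Set X) (U : ℕ → Set X) where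
  level : ℕ → Set (Set X)
  level_zero : level 0 = {W}
  isOpen : ∀ n, ∀ B ∈ level n, IsOpen B
  pairwiseDisjoint : ∀ n, (level n).PairwiseDisjoint (q '' ·)
  parent : ∀ n, ∀ B ∈ level (n + 1), ∃ A ∈ level n, closure B ⊆ A ∩ U n
  image_subset_closure : ∀ n, q '' W ⊆ closure (⋃ B ∈ level n, q '' B)

variable {W : Set X} {U : ℕ → Set X}

theorem OpenSieve.nonempty [RegularSpace X] (hq : Continuous q) (hW : IsOpen W)
    (hU : ∀ n, IsOpen (U n)) (hUd : ∀ n, Dense (U n)) : Nonempty (OpenSieve q W U) := by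
  choose next hnext hdisj hcover using
    fun n => exists_refinement_pairwiseDisjoint_image hq (hU n) (hUd n)
  let level : ℕ → Set (Set X) := fun n => Nat.rec {W} next n
  have hopen : ∀ n, ∀ B ∈ level n, IsOpen B := by
    rintro (_ | n) B hB
    · exact (mem_singleton_iff.1 hB) ▸ hW
    · exact (hnext n _ B hB).1
  refine ⟨level, rfl, hopen, ?_, fun n B hB => (hnext n _ B hB).2, fun n => ?_⟩
  · rintro (_ | n)
    · exact pairwiseDisjoint_singleton _ _
    · exact hdisj n _
  · induction n with
    | zero => exact subset_closure.trans (closure_mono (subset_biUnion_of_mem (mem_singleton W)))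
    | succ n ih => exact ih.trans (closure_minimal (iUnion₂_subset fun A hA =>
        hcover n _ A hA (hopen n A hA)) isClosed_closure)

theorem OpenSieve.exists_branch (S : OpenSieve q W U) {y : Y}
    (hy : ∀ n, y ∈ ⋃ B ∈ S.level n, q '' B) :
    ∃ B : ℕ → Set X, B 0 = W ∧ (∀ n, IsOpen (B n)) ∧ (∀ n, y ∈ q '' B n) ∧
      ∀ n, closure (B (n + 1)) ⊆ B n ∩ U n := by
  simp only [mem_iUnion₂, exists_prop] at hy
  choose B hB hyB using hy
  refine ⟨B, by simpa [S.level_zero] using hB 0, fun n => S.isOpen n _ (hB n), hyB, fun n => ?_⟩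
  obtain ⟨A, hA, hcl⟩ := S.parent n _ (hB (n + 1))
  have hyA : y ∈ q '' A :=
    image_mono (subset_closure.trans (hcl.trans inter_subset_left)) (hyB (n + 1))
  obtain rfl : A = B n :=
    (S.pairwiseDisjoint n).elim hA (hB n) (not_disjoint_iff.2 ⟨y, hyA, hyB n⟩)
  exact hcl

end OpenSieve

theorem BaireSpace.nonempty_inter_iInter {Y : Type*} [TopologicalSpace Y] [BaireSpace Y]
    {V : Set Y} (hV : IsOpen V) (hVne : V.Nonempty) {D : ℕ → Set Y} (hD : ∀ n, IsOpen (D n))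
    (hVD : ∀ n, V ⊆ closure (D n)) : (V ∩ ⋂ n, D n).Nonempty := by
  have hdense : Dense (⋂ n, D n ∪ (closure V)ᶜ) := by
    refine dense_iInter_of_isOpen_nat (fun n => (hD n).union isClosed_closure.isOpen_compl)
      fun n z => ?_
    by_cases hz : z ∈ closure V
    · exact closure_mono subset_union_left (closure_minimal (hVD n) isClosed_closure hz)
    · exact subset_closure (Or.inr hz)
  obtain ⟨y, hyV, hy⟩ := hdense.inter_open_nonempty V hV hVne
  exact ⟨y, hyV, mem_iInter.2 fun n =>
    (mem_iInter.1 hy n).resolve_right (not_not_intro (subset_closure hyV))⟩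

theorem BaireSpace.of_isOpenMap {X Y : Type*} [TopologicalSpace X] [RegularSpace X]
    [TopologicalSpace Y] [BaireSpace Y] {q : X → Y} (hq : Continuous q) (hqo : IsOpenMap q)
    (hfib : ∀ y (T : ℕ → Set X), (∀ n, IsOpen (T n)) → Antitone T → (∀ n, y ∈ q '' T n) →
      ∃ p, ∀ n, p ∈ closure (T n)) :
    BaireSpace X := by
  refine ⟨fun U hU hUd => dense_iff_inter_open.2 fun W hW hWne => ?_⟩
  obtain ⟨S⟩ := OpenSieve.nonempty hq hW hU hUd
  obtain ⟨y, -, hy⟩ := BaireSpace.nonempty_inter_iInter (hqo W hW) (hWne.image q)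
    (fun n => isOpen_biUnion fun B hB => hqo B (S.isOpen n B hB)) S.image_subset_closure
  obtain ⟨B, hB0, hBo, hyB, hBU⟩ := S.exists_branch (mem_iInter.1 hy)
  obtain ⟨p, hp⟩ := hfib y B hBo
    (antitone_nat_of_succ_le fun n => subset_closure.trans ((hBU n).trans inter_subset_left)) hyB
  exact ⟨p, hB0 ▸ (hBU 0 (hp 1)).1, mem_iInter.2 fun n => (hBU n (hp (n + 1))).2⟩

theorem QuotientGroup.exists_mem_closure_of_pseudocompact {G : Type*} [Group G]
    [TopologicalSpace G] [IsTopologicalGroup G] {K : Subgroup G} (hK : Pseudocompact K)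
    (y : G ⧸ K) (T : ℕ → Set G) (hT : ∀ n, IsOpen (T n)) (hanti : Antitone T)
    (hy : ∀ n, y ∈ ((↑) : G → G ⧸ K) '' T n) : ∃ p, ∀ n, p ∈ closure (T n) := by
  obtain ⟨g, -, rfl⟩ := hy 0
  have hφ : Continuous fun k : K => g * k := by fun_prop
  have := IsTopologicalGroup.completelyRegularSpace K
  have hne : ∀ n, ((g * ↑·) ⁻¹' T n : Set K).Nonempty := fun n => by
    obtain ⟨x, hx, hxg⟩ := hy n
    exact ⟨⟨g⁻¹ * x, QuotientGroup.eq.1 hxg.symm⟩, by simpa using hx⟩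
  obtain ⟨p, hp⟩ := hK.exists_mem_closure_of_antitone (fun n => (hT n).preimage hφ) hne
    fun m n hmn => preimage_mono (hanti hmn)
  exact ⟨g * p, fun n => hφ.closure_preimage_subset _ (hp n)⟩

theorem stmt12_general {G : Type*} [Group G] [TopologicalSpace G] [IsTopologicalGroup G]
    (K : Subgroup G)
    (hpseudo : ∀ f : K → ℝ, Continuous f → ∃ M : ℝ, ∀ x, |f x| ≤ M)
    (hquot : BaireSpace (G ⧸ K)) :
    BaireSpace G :=
  BaireSpace.of_isOpenMap QuotientGroup.continuous_mk QuotientGroup.isOpenMap_coe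
    (QuotientGroup.exists_mem_closure_of_pseudocompact hpseudo)

/-- If `K` is a closed pseudocompact normal subgroup of a totally bounded Hausdorff
topological group `G` and the quotient group `G/K` is Baire, then `G` is Baire. -/
theorem stmt12 {G : Type*} [Group G] [TopologicalSpace G] [IsTopologicalGroup G] [T2Space G]
    (htb : ∀ U ∈ nhds (1 : G), ∃ F : Finset G, U * (F : Set G) = Set.univ)
    (K : Subgroup G) [K.Normal] (hclosed : IsClosed (K : Set G))
    (hpseudo : ∀ f : K → ℝ, Continuous f → ∃ M : ℝ, ∀ x, |f x| ≤ M)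
    (hquot : BaireSpace (G ⧸ K)) :
    BaireSpace G :=
  stmt12_general K hpseudo hquot
end

section
/- Let G be a dense subgroup of a compact Hausdorff abelian group K. If G is a Baire space, then the dual group G^ with the pointwise convergence topology contains no nontrivial convergent sequences. -/
open Complex Filter Topology

lemma circle_norm_one (z : Circle) : ‖(z : ℂ)‖ = 1 := by
  rw [Circle.norm_coe]

lemma circle_eq_one_of_pows_close (w : ℂ) (hw : ‖w‖ = 1)
    (h : ∀ k : ℕ, ‖w ^ k - 1‖ ≤ 3 / 10) : w = 1 := by
  have hwabs : ‖w‖ = 1 := by exact hw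
  have hwexp : w = Complex.exp (w.arg * I) := by
    conv_lhs => rw [← Complex.norm_mul_exp_arg_mul_I w]
    rw [hwabs, ofReal_one, one_mul]
  by_contra hne
  have harg : w.arg ≠ 0 := by
    intro h0
    rw [h0] at hwexp
    simp at hwexp
    exact hne hwexp
  set t : ℝ := |w.arg| with ht
  have ht0 : 0 < t := abs_pos.2 harg
  have htpi : t ≤ Real.pi := Complex.abs_arg_le_pi w
  set k : ℕ := ⌈Real.pi / (2 * t)⌉₊ with hk
  have hk1 : Real.pi / 2 ≤ k * t := by
    have := Nat.le_ceil (Real.pi / (2 * t))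
    rw [div_le_iff₀ (by positivity)] at this ⊢
    calc Real.pi ≤ ⌈Real.pi / (2*t)⌉₊ * (2*t) := by linarith [this]
    _ = k * t * 2 := by ring
  have hk2 : (k : ℝ) * t ≤ Real.pi + Real.pi / 2 := by
    have h2 : (k : ℝ) < Real.pi / (2 * t) + 1 := Nat.ceil_lt_add_one (by positivity)
    have := mul_lt_mul_of_pos_right h2 ht0
    have hdiv : (Real.pi / (2 * t) + 1) * t = Real.pi / 2 + t := by
      field_simp
    rw [hdiv] at this
    linarith
  have hcos : Real.cos ((k : ℝ) * w.arg) ≤ 0 := by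
    have : Real.cos ((k:ℝ) * w.arg) = Real.cos ((k:ℝ) * t) := by
      rw [← Real.cos_abs ((k:ℝ) * w.arg), abs_mul, Nat.abs_cast, ht]
    rw [this]
    exact Real.cos_nonpos_of_pi_div_two_le_of_le hk1 hk2
  have hre : (w ^ k).re = Real.cos ((k : ℝ) * w.arg) := by
    have hwk : w ^ k = Complex.exp ((((k:ℝ) * w.arg : ℝ) : ℂ) * I) := by
      conv_lhs => rw [hwexp]
      rw [← Complex.exp_nat_mul]
      congr 1
      push_cast
      ring
    rw [hwk, Complex.exp_ofReal_mul_I_re]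
  have habsk : ‖w ^ k‖ = 1 := by rw [norm_pow, hwabs, one_pow]
  have hnormSq : Complex.normSq (w ^ k - 1) = 2 - 2 * (w ^ k).re := by
    have h1 : Complex.normSq (w ^ k) = 1 := by
      rw [← Complex.sq_norm, habsk, one_pow]
    simp [Complex.normSq_apply, Complex.sub_re, Complex.sub_im] at h1 ⊢
    nlinarith [h1]
  have hk' := h k
  have hsq : ‖w ^ k - 1‖ ^ 2 = Complex.normSq (w ^ k - 1) := by
    rw [Complex.sq_norm]
  nlinarith [norm_nonneg (w ^ k - 1), hre, hcos]


/-- Let `G` be a dense subgroup of a compact Hausdorff abelian group `K`. If `G` is a Baire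
space, then the dual group `G^` with the pointwise convergence topology contains no
nontrivial convergent sequences: every sequence of continuous characters of `G` that
converges pointwise to a character is eventually constant. -/
theorem stmt16 {K : Type*} [CommGroup K] [TopologicalSpace K] [IsTopologicalGroup K]
    [CompactSpace K] [T2Space K] (G : Subgroup K) (hdense : Dense (G : Set K))
    [BaireSpace G] (χ : ℕ → ContinuousMonoidHom G Circle)
    (χlim : ContinuousMonoidHom G Circle)
    (hconv : ∀ x : G, Filter.Tendsto (fun n => χ n x) Filter.atTop (nhds (χlim x))) :
    ∃ N, ∀ m ≥ N, χ m = χ N := by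
  classical
  set φ : ℕ → G → Circle := fun n x => χ n x * (χlim x)⁻¹ with hφ
  have φmul : ∀ n (a b : G), φ n (a * b) = φ n a * φ n b := by
    intro n a b
    simp only [hφ, map_mul, mul_inv]
    exact mul_mul_mul_comm _ _ _ _
  have φcont : ∀ n, Continuous fun x : G => ((φ n x : ℂ)) := by
    intro n
    exact continuous_subtype_val.comp ((χ n).continuous.mul (χlim.continuous.inv))
  have hφconv : ∀ x : G, Tendsto (fun n => ‖(φ n x : ℂ) - 1‖) atTop (𝓝 0) := by
    intro x
    have h1 : Tendsto (fun n => (χ n x : ℂ)) atTop (𝓝 (χlim x : ℂ)) :=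
      (continuous_subtype_val.tendsto _).comp (hconv x)
    have h2 : Tendsto (fun n => (φ n x : ℂ)) atTop (𝓝 1) := by
      have := h1.mul_const (((χlim x : Circle) : ℂ)⁻¹)
      rw [mul_inv_cancel₀ (Circle.coe_ne_zero _)] at this
      simpa [hφ] using this
    have h3 : Tendsto (fun n => (φ n x : ℂ) - 1) atTop (𝓝 (1 - 1)) :=
      h2.sub (tendsto_const_nhds (x := (1:ℂ)))
    rw [sub_self] at h3
    simpa using h3.norm
  have hφev : ∀ (x : G) (c : ℝ), 0 < c → ∀ᶠ n in atTop, ‖(φ n x : ℂ) - 1‖ ≤ c := by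
    intro x c hc
    exact (hφconv x).eventually (eventually_le_nhds hc)
  -- Baire category argument
  set C : ℕ → Set G := fun N => {x | ∀ m, N ≤ m → ‖(φ m x : ℂ) - 1‖ ≤ 1 / 10} with hC
  have hCclosed : ∀ N, IsClosed (C N) := by
    intro N
    have : C N = ⋂ (m : ℕ) (_ : N ≤ m), {x : G | ‖(φ m x : ℂ) - 1‖ ≤ 1 / 10} := by
      ext x; simp [hC, Set.mem_iInter]
    rw [this]
    exact isClosed_iInter fun m => isClosed_iInter fun _ =>
      isClosed_le (((φcont m).sub continuous_const).norm) continuous_const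
  have hCunion : (⋃ N, C N) = Set.univ := by
    ext x
    simp only [Set.mem_iUnion, Set.mem_univ, iff_true]
    obtain ⟨N, hN⟩ := (hφev x (1/10) (by norm_num)).exists_forall_of_atTop
    exact ⟨N, fun m hm => hN m hm⟩
  obtain ⟨N, hNne⟩ := nonempty_interior_of_iUnion_of_closed hCclosed hCunion
  obtain ⟨u, hu⟩ := hNne
  obtain ⟨t, htopen, hteq⟩ := isOpen_induced_iff.1 (isOpen_interior
    (s := C N))
  have hut : (u : K) ∈ t := by rw [← Set.mem_preimage, hteq]; exact hu
  have htsub : ∀ x : G, (x : K) ∈ t → x ∈ C N := by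
    intro x hx
    have : x ∈ interior (C N) := by rw [← hteq]; exact hx
    exact interior_subset this
  have huC : u ∈ C N := htsub u hut
  set O : Set K := (fun y => (u : K) * y) ⁻¹' t with hO
  have hOopen : IsOpen O := htopen.preimage (continuous_mul_left _)
  have h1O : (1 : K) ∈ O := by simp [hO, hut]
  -- key1
  have key1 : ∀ x : G, (x : K) ∈ O → ∀ m, N ≤ m → ‖(φ m x : ℂ) - 1‖ ≤ 2 / 10 := by
    intro x hx m hm
    have hux : (↑(u * x) : K) ∈ t := hx
    have h1 := htsub (u * x) hux m hm
    have h2 := huC m hm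
    have hmul : (φ m (u * x) : ℂ) = (φ m u : ℂ) * (φ m x : ℂ) := by
      rw [φmul]; rfl
    calc ‖(φ m x : ℂ) - 1‖ = ‖(φ m u : ℂ) * ((φ m x : ℂ) - 1)‖ := by
          rw [norm_mul, circle_norm_one, one_mul]
      _ = ‖((φ m (u * x) : ℂ) - 1) + (1 - (φ m u : ℂ))‖ := by rw [hmul]; ring_nf
      _ ≤ ‖(φ m (u * x) : ℂ) - 1‖ + ‖1 - (φ m u : ℂ)‖ := norm_add_le _ _
      _ ≤ 1 / 10 + 1 / 10 := by rw [norm_sub_rev (1: ℂ)]; exact add_le_add h1 h2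
      _ = 2 / 10 := by norm_num
  obtain ⟨V, hVopen, hV1, hVsub⟩ := exists_open_nhds_one_mul_subset (hOopen.mem_nhds h1O)
  set O₀ : Set K := V ∩ V⁻¹ with hO₀
  have hO₀open : IsOpen O₀ := hVopen.inter hVopen.inv
  have h1O₀ : (1 : K) ∈ O₀ := ⟨hV1, by simpa using hV1⟩
  have key2 : ∀ a b : K, a ∈ O₀ → b ∈ O₀ → a⁻¹ * b ∈ O := by
    intro a b ha hb
    exact hVsub (Set.mul_mem_mul (Set.mem_inv.1 ha.2) hb.1)
  -- compactness: finite cover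
  have hcov : (Set.univ : Set K) ⊆ ⋃ y : K, (fun z => y⁻¹ * z) ⁻¹' O₀ := by
    intro z _
    exact Set.mem_iUnion.2 ⟨z, by simpa using h1O₀⟩
  obtain ⟨s, hs⟩ := isCompact_univ.elim_finite_subcover
    (fun y : K => (fun z => y⁻¹ * z) ⁻¹' O₀)
    (fun y => hO₀open.preimage (continuous_mul_left _)) hcov
  -- choose g y ∈ G in each piece
  have hg : ∀ y : K, ∃ g : G, y⁻¹ * (g : K) ∈ O₀ := by
    intro y
    obtain ⟨z, hzG, hz⟩ := hdense.exists_mem_open (hO₀open.preimage (continuous_mul_left y⁻¹))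
      ⟨y, by simpa using h1O₀⟩
    exact ⟨⟨z, hzG⟩, hz⟩
  choose g hgO using hg
  have hMy : ∀ y : K, ∃ M, ∀ m, M ≤ m → ‖(φ m (g y) : ℂ) - 1‖ ≤ 1 / 10 := by
    intro y
    obtain ⟨M, hM⟩ := (hφev (g y) (1/10) (by norm_num)).exists_forall_of_atTop
    exact ⟨M, hM⟩
  choose M hM using hMy
  set M₀ : ℕ := max N (s.sup M) with hM₀
  -- global smallness
  have key3 : ∀ m, M₀ ≤ m → ∀ x : G, ‖(φ m x : ℂ) - 1‖ ≤ 3 / 10 := by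
    intro m hm x
    have hx := hs (Set.mem_univ (x : K))
    rw [Set.mem_iUnion₂] at hx
    obtain ⟨y, hys, hyx⟩ := hx
    have hNm : N ≤ m := le_trans (le_max_left _ _) hm
    have hMym : M y ≤ m := le_trans (le_trans (Finset.le_sup hys) (le_max_right _ _)) hm
    have hgx : ((g y)⁻¹ * x : G) = (g y)⁻¹ * x := rfl
    have hmem : (((g y)⁻¹ * x : G) : K) ∈ O := by
      have : (((g y)⁻¹ * x : G) : K) = (y⁻¹ * (g y : K))⁻¹ * (y⁻¹ * (x : K)) := by
        push_cast
        group
      rw [this]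
      exact key2 _ _ (hgO y) hyx
    have h1 := key1 _ hmem m hNm
    have h2 := hM y m hMym
    have hmul : (φ m x : ℂ) = (φ m (g y) : ℂ) * (φ m ((g y)⁻¹ * x) : ℂ) := by
      rw [← Circle.coe_mul, ← φmul, mul_inv_cancel_left]
    calc ‖(φ m x : ℂ) - 1‖
        = ‖((φ m (g y) : ℂ)) * ((φ m ((g y)⁻¹ * x) : ℂ) - 1) + ((φ m (g y) : ℂ) - 1)‖ := by
          rw [hmul]; ring_nf
      _ ≤ ‖((φ m (g y) : ℂ)) * ((φ m ((g y)⁻¹ * x) : ℂ) - 1)‖ + ‖(φ m (g y) : ℂ) - 1‖ :=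
          norm_add_le _ _
      _ = ‖(φ m ((g y)⁻¹ * x) : ℂ) - 1‖ + ‖(φ m (g y) : ℂ) - 1‖ := by
          rw [norm_mul, circle_norm_one, one_mul]
      _ ≤ 2 / 10 + 1 / 10 := add_le_add h1 h2
      _ = 3 / 10 := by norm_num
  -- conclude χ m = χlim for m ≥ M₀
  have hfinal : ∀ m, M₀ ≤ m → χ m = χlim := by
    intro m hm
    ext x
    have hone : (φ m x : ℂ) = 1 := by
      apply circle_eq_one_of_pows_close _ (circle_norm_one _)
      intro k
      have hpow : ((φ m x : ℂ)) ^ k = (φ m (x ^ k) : ℂ) := by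
        have : φ m (x ^ k) = (φ m x) ^ k := by
          simp only [hφ, map_pow, inv_pow, mul_pow]
        rw [this]
        rfl
      rw [hpow]
      exact key3 m hm (x ^ k)
    have : φ m x = 1 := Circle.ext hone
    have h := mul_inv_eq_one.1 this
    rw [h]
  exact ⟨M₀, fun m hm => (hfinal m hm).trans (hfinal M₀ le_rfl).symm⟩
end

section
/- If H is a dense subgroup of a topological abelian group G and the restriction map G^ → H^, χ ↦ χ|_H, is a bijection between discrete dual groups, and H is not compact while G is compact, then H is not reflexive. -/
theorem stmt17_general {G : Type*} [CommGroup G] [TopologicalSpace G] (H : Subgroup G)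
    (hnc : ¬ CompactSpace H)
    (hHdisc : DiscreteTopology (PontryaginDual H)) :
    ¬ ∃ e : H ≃ₜ PontryaginDual (PontryaginDual H),
        (∀ x y : H, e (x * y) = e x * e y) ∧
          ∀ (x : H) (χ : PontryaginDual H), e x χ = χ x := by
  rintro ⟨e, -, -⟩
  -- `H^^` is compact, being the dual of the discrete group `H^`.
  exact hnc e.symm.compactSpace

/-- Let `H` be a dense subgroup of a compact Hausdorff abelian group `G` such that the dual
groups `G^` and `H^` are discrete and the restriction map `χ ↦ χ|_H` is a bijection
(hence a topological isomorphism of discrete groups). If `H` is not compact, then `H` is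
not reflexive: there is no topological isomorphism `H ≃ H^^` given by evaluation. -/
theorem stmt17 {G : Type*} [CommGroup G] [TopologicalSpace G] [IsTopologicalGroup G]
    [CompactSpace G] [T2Space G] (H : Subgroup G) (hdense : Dense (H : Set G))
    (hnc : ¬ CompactSpace H)
    (hGdisc : DiscreteTopology (PontryaginDual G))
    (hHdisc : DiscreteTopology (PontryaginDual H))
    (hres : ∃ e : PontryaginDual G ≃ PontryaginDual H,
      ∀ (χ : PontryaginDual G) (x : H), e χ x = χ (x : G)) :
    ¬ ∃ e : H ≃ₜ PontryaginDual (PontryaginDual H),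
        (∀ x y : H, e (x * y) = e x * e y) ∧
          ∀ (x : H) (χ : PontryaginDual H), e x χ = χ x :=
  stmt17_general H hnc hHdisc
end

section
/- The product of a Baire space and a second countable Baire space is a Baire space. -/
/-!
Let `f n` be dense open sets in `X × Y` and `B` a countable basis of `Y` without `∅`. For each
`n` and `V ∈ B`, the projection to `X` of `f n ∩ (X × V)` is open and dense, so by the Baire
property of `X` there is a dense set of `x` lying in all of these countably many projections.
For such an `x` every slice `{y | (x, y) ∈ f n}` meets every basic open set, hence is dense
open in `Y`, and by the Baire property of `Y` their intersection is dense. A set whose slices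
are dense over a dense set of `x` is dense in `X × Y`.
-/

open Set TopologicalSpace

section

variable {X Y : Type*} [TopologicalSpace Y]

theorem TopologicalSpace.IsTopologicalBasis.dense_slice_of_forall_mem_image_fst {B : Set (Set Y)}
    (hB : IsTopologicalBasis B) {U : Set (X × Y)} {x : X}
    (h : ∀ V ∈ B, x ∈ Prod.fst '' (U ∩ univ ×ˢ V)) : Dense {y | (x, y) ∈ U} := by
  refine hB.dense_iff.2 fun V hV _ => ?_
  obtain ⟨⟨x', y⟩, ⟨hxy, -, hyV⟩, rfl⟩ := h V hV
  exact ⟨y, hyV, hxy⟩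

variable [TopologicalSpace X]

theorem dense_of_dense_setOf_dense_slice {S : Set (X × Y)}
    (h : Dense {x | Dense {y | (x, y) ∈ S}}) : Dense S := by
  refine dense_iff_inter_open.2 fun s hs ⟨⟨x₀, y₀⟩, hs₀⟩ => ?_
  obtain ⟨u, v, hu, hv, hx₀, hy₀, huv⟩ := isOpen_prod_iff.1 hs x₀ y₀ hs₀
  obtain ⟨x, hxu, hx⟩ := h.inter_open_nonempty u hu ⟨x₀, hx₀⟩
  obtain ⟨y, hyv, hy⟩ := hx.inter_open_nonempty v hv ⟨y₀, hy₀⟩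
  exact ⟨(x, y), huv ⟨hxu, hyv⟩, hy⟩

theorem Dense.image_fst_inter_univ_prod {U : Set (X × Y)} (hU : Dense U) {V : Set Y}
    (hV : IsOpen V) (hV' : V.Nonempty) : Dense (Prod.fst '' (U ∩ univ ×ˢ V)) := by
  refine dense_iff_inter_open.2 fun O hO hO' => ?_
  obtain ⟨⟨x, y⟩, ⟨hxO, hyV⟩, hxy⟩ := hU.inter_open_nonempty _ (hO.prod hV) (hO'.prod hV')
  exact ⟨x, hxO, ⟨(x, y), ⟨hxy, mem_univ x, hyV⟩, rfl⟩⟩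

theorem dense_setOf_forall_dense_slice [BaireSpace X] [SecondCountableTopology Y]
    {ι : Type*} [Countable ι] {f : ι → Set (X × Y)} (ho : ∀ i, IsOpen (f i))
    (hd : ∀ i, Dense (f i)) : Dense {x | ∀ i, Dense {y | (x, y) ∈ f i}} := by
  obtain ⟨B, hBc, hB₀, hB⟩ := exists_countable_basis Y
  have : Countable B := hBc.to_subtype
  have hG : Dense (⋂ p : ι × B, Prod.fst '' (f p.1 ∩ univ ×ˢ (p.2 : Set Y))) := by
    refine dense_iInter_of_isOpen (fun p => isOpenMap_fst _ ?_) fun p => ?_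
    · exact (ho p.1).inter (isOpen_univ.prod (hB.isOpen p.2.2))
    · exact (hd p.1).image_fst_inter_univ_prod (hB.isOpen p.2.2)
        (nonempty_iff_ne_empty.2 fun h => hB₀ (h ▸ p.2.2))
  refine hG.mono fun x hx i => hB.dense_slice_of_forall_mem_image_fst fun V hV => ?_
  exact mem_iInter.1 hx (i, ⟨V, hV⟩)

end

/-- The product of a Baire space and a second countable Baire space is a Baire space. -/
theorem stmt19 {X Y : Type*} [TopologicalSpace X] [TopologicalSpace Y]
    [BaireSpace X] [BaireSpace Y] [SecondCountableTopology Y] :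
    BaireSpace (X × Y) := by
  refine ⟨fun f ho hd => dense_of_dense_setOf_dense_slice ?_⟩
  refine (dense_setOf_forall_dense_slice ho hd).mono fun x hx => ?_
  show Dense ((x, ·) ⁻¹' ⋂ n, f n)
  rw [preimage_iInter]
  exact dense_iInter_of_isOpen_nat (fun n => (ho n).preimage (Continuous.prodMk_right x)) hx
end
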